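/- Let φ, ψ : ℝ² → ℝ be smooth functions of (u,w) and set η ≡ 1. Then the triple (φ, ψ, η) satisfies the integrability conditions and in addition ψ_w ≡ 0, if and only if there exist constants β, γ, δ, c₁, c₂ ∈ ℝ such that ψ(u,w) = γ·u + c₁ and φ(u,w) = β·w − (1/2)β(β+γ)·u² + δ·u + c₂ for all (u,w). -/

import Mathlib

/-- Partial derivative in the first (u) coordinate of a function on ℝ² = ℝ × ℝ. -/
noncomputable def pu (f : ℝ × ℝ → ℝ) : ℝ × ℝ → ℝ :=
  fun p => deriv (fun s => f (s, p.2)) p.1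

/-- Partial derivative in the second (w) coordinate. -/
noncomputable def pw (f : ℝ × ℝ → ℝ) : ℝ × ℝ → ℝ :=
  fun p => deriv (fun s => f (p.1, s)) p.2

/-- The nine integrability conditions for a triple (φ, ψ, η) of functions of (u, w),
holding at every point of the set `S`. -/
def IntCond (φ ψ η : ℝ × ℝ → ℝ) (S : Set (ℝ × ℝ)) : Prop :=
  ∀ p ∈ S,
    η p * pu (pu φ) p = -((pw φ p) ^ 2 + pu ψ p * pw φ p - 2 * pw ψ p * pu φ p) ∧
    η p * pw (pu φ) p = pw η p * pu φ p ∧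
    η p * pw (pw φ) p = pw η p * pw φ p ∧
    η p * pu (pu ψ) p =
      -(pw φ p) * pw ψ p + pu ψ p * pw ψ p - 2 * pw φ p * pu η p + 2 * pw η p * pu φ p ∧
    η p * pw (pu ψ) p = pw η p * pu ψ p ∧
    η p * pw (pw ψ) p = pw η p * pw ψ p ∧
    η p * pu (pu η) p = -(pw η p) * (pw φ p - pu ψ p) ∧
    η p * pw (pu η) p = pw η p * pu η p ∧
    η p * pw (pw η) p = (pw η p) ^ 2

section Helpers

lemma secU_contDiff {f : ℝ × ℝ → ℝ} (hf : ContDiff ℝ (⊤ : ℕ∞) f) (w : ℝ) :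
    ContDiff ℝ (⊤ : ℕ∞) (fun s => f (s, w)) :=
  hf.comp (contDiff_id.prodMk contDiff_const)

lemma secW_contDiff {f : ℝ × ℝ → ℝ} (hf : ContDiff ℝ (⊤ : ℕ∞) f) (u : ℝ) :
    ContDiff ℝ (⊤ : ℕ∞) (fun s => f (u, s)) :=
  hf.comp (contDiff_const.prodMk contDiff_id)

lemma pu_eq_fderiv {f : ℝ × ℝ → ℝ} (hf : ContDiff ℝ (⊤ : ℕ∞) f) (p : ℝ × ℝ) :
    pu f p = fderiv ℝ f p (1, 0) := by
  have hd : HasDerivAt (fun s => (s, p.2) : ℝ → ℝ × ℝ) (1, 0) p.1 :=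
    (hasDerivAt_id p.1).prodMk (hasDerivAt_const p.1 p.2)
  have hF : HasFDerivAt f (fderiv ℝ f p) p :=
    (hf.differentiable (by simp) p).hasFDerivAt
  exact (hF.comp_hasDerivAt p.1 hd).deriv

lemma pw_eq_fderiv {f : ℝ × ℝ → ℝ} (hf : ContDiff ℝ (⊤ : ℕ∞) f) (p : ℝ × ℝ) :
    pw f p = fderiv ℝ f p (0, 1) := by
  have hd : HasDerivAt (fun s => (p.1, s) : ℝ → ℝ × ℝ) (0, 1) p.2 :=
    (hasDerivAt_const p.2 p.1).prodMk (hasDerivAt_id p.2)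
  have hF : HasFDerivAt f (fderiv ℝ f p) p :=
    (hf.differentiable (by simp) p).hasFDerivAt
  exact (hF.comp_hasDerivAt p.2 hd).deriv

lemma pu_contDiff {f : ℝ × ℝ → ℝ} (hf : ContDiff ℝ (⊤ : ℕ∞) f) : ContDiff ℝ (⊤ : ℕ∞) (pu f) := by
  have h : ContDiff ℝ (⊤ : ℕ∞) (fun p => fderiv ℝ f p (1, 0)) :=
    (hf.fderiv_right (by simp)).clm_apply contDiff_const
  have e : pu f = fun p => fderiv ℝ f p (1, 0) := funext (pu_eq_fderiv hf)
  rw [e]; exact h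

lemma pw_contDiff {f : ℝ × ℝ → ℝ} (hf : ContDiff ℝ (⊤ : ℕ∞) f) : ContDiff ℝ (⊤ : ℕ∞) (pw f) := by
  have h : ContDiff ℝ (⊤ : ℕ∞) (fun p => fderiv ℝ f p (0, 1)) :=
    (hf.fderiv_right (by simp)).clm_apply contDiff_const
  have e : pw f = fun p => fderiv ℝ f p (0, 1) := funext (pw_eq_fderiv hf)
  rw [e]; exact h

lemma hasDerivAt_poly2 (a b c x : ℝ) :
    HasDerivAt (fun s : ℝ => a * s ^ 2 + b * s + c) (2 * a * x + b) x := by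
  have h1 := (hasDerivAt_pow 2 x).const_mul a
  have h2 := (hasDerivAt_id x).const_mul b
  have := (h1.add h2).add_const c
  convert this using 1
  all_goals first | rfl | (norm_num; ring)

lemma integrate {f g' : ℝ → ℝ} (g : ℝ → ℝ) (hf : Differentiable ℝ f)
    (hg : ∀ x, HasDerivAt g (g' x) x) (h : ∀ x, deriv f x = g' x) (x : ℝ) :
    f x = g x + (f 0 - g 0) := by
  have hF : Differentiable ℝ (fun x => f x - g x) :=
    hf.sub fun x => (hg x).differentiableAt
  have hF' : ∀ x, deriv (fun x => f x - g x) x = 0 := by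
    intro x
    rw [deriv_fun_sub (hf x) (hg x).differentiableAt, h, (hg x).deriv, sub_self]
  have := is_const_of_deriv_eq_zero hF hF' x 0
  linarith [this]

end Helpers

/-- The polynomial subcase of Case 1 (η ≡ 1): the integrability conditions together with
ψ_w ≡ 0 hold iff ψ = γu + c₁ and φ = βw − (1/2)β(β+γ)u² + δu + c₂. -/
theorem statement3
    (φ ψ : ℝ × ℝ → ℝ) (hφ : ContDiff ℝ (⊤ : ℕ∞) φ) (hψ : ContDiff ℝ (⊤ : ℕ∞) ψ) :
    (IntCond φ ψ (fun _ => 1) Set.univ ∧ ∀ p : ℝ × ℝ, pw ψ p = 0) ↔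
    ∃ β γ δ c₁ c₂ : ℝ, ∀ p : ℝ × ℝ,
      ψ p = γ * p.1 + c₁ ∧
      φ p = β * p.2 - (1 / 2) * β * (β + γ) * p.1 ^ 2 + δ * p.1 + c₂ := by
  have hηu : ∀ p : ℝ × ℝ, pu (fun _ : ℝ × ℝ => (1 : ℝ)) p = 0 := by
    intro p; simp [pu]
  have hηw : ∀ p : ℝ × ℝ, pw (fun _ : ℝ × ℝ => (1 : ℝ)) p = 0 := by
    intro p; simp [pw]
  constructor
  · rintro ⟨hI, hpsw⟩
    -- extract the simplified conditions
    have C1 : ∀ p : ℝ × ℝ, pu (pu φ) p =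
        -((pw φ p) ^ 2 + pu ψ p * pw φ p - 2 * pw ψ p * pu φ p) := by
      intro p; have := (hI p trivial).1; simpa using this
    have C2 : ∀ p : ℝ × ℝ, pw (pu φ) p = 0 := by
      intro p; have := (hI p trivial).2.1; rw [hηw] at this; simpa using this
    have C3 : ∀ p : ℝ × ℝ, pw (pw φ) p = 0 := by
      intro p; have := (hI p trivial).2.2.1; rw [hηw] at this; simpa using this
    have C4 : ∀ p : ℝ × ℝ, pu (pu ψ) p = 0 := by
      intro p; have := (hI p trivial).2.2.2.1
      rw [hηw, hηu, hpsw] at this; simpa using this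
    -- ψ part
    have hψw0 : ∀ u w : ℝ, ψ (u, w) = ψ (u, 0) := by
      intro u w
      exact is_const_of_deriv_eq_zero
        ((secW_contDiff hψ u).differentiable (by simp))
        (fun s => hpsw (u, s)) w 0
    have hpuψ0 : ∀ u : ℝ, pu ψ (u, 0) = pu ψ (0, 0) := by
      intro u
      exact is_const_of_deriv_eq_zero
        ((secU_contDiff (pu_contDiff hψ) 0).differentiable (by simp))
        (fun s => C4 (s, 0)) u 0
    have hψ0 : ∀ u : ℝ, ψ (u, 0) = pu ψ (0, 0) * u + ψ (0, 0) := by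
      intro u
      have key := integrate (f := fun s => ψ (s, 0))
        (g := fun s : ℝ => 0 * s ^ 2 + pu ψ (0, 0) * s + ψ (0, 0))
        (g' := fun s : ℝ => 2 * 0 * s + pu ψ (0, 0))
        ((secU_contDiff hψ 0).differentiable (by simp))
        (fun x => hasDerivAt_poly2 0 (pu ψ (0, 0)) (ψ (0, 0)) x)
        (fun x => by
          show pu ψ (x, 0) = 2 * 0 * x + pu ψ (0, 0)
          rw [hpuψ0 x]; ring) u
      rw [key]; ring
    have hψall : ∀ p : ℝ × ℝ, ψ p = pu ψ (0, 0) * p.1 + ψ (0, 0) := by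
      rintro ⟨u, w⟩
      show ψ (u, w) = _
      rw [hψw0 u w, hψ0 u]
    have hpuψ : ∀ p : ℝ × ℝ, pu ψ p = pu ψ (0, 0) := by
      intro p
      have e : (fun s => ψ (s, p.2)) = fun s : ℝ => pu ψ (0, 0) * s + ψ (0, 0) :=
        funext fun s => hψall (s, p.2)
      show deriv (fun s => ψ (s, p.2)) p.1 = pu ψ (0, 0)
      rw [e]
      have hd : HasDerivAt (fun s : ℝ => pu ψ (0, 0) * s + ψ (0, 0))
          (pu ψ (0, 0) * 1) p.1 := ((hasDerivAt_id p.1).const_mul _).add_const _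
      rw [hd.deriv, mul_one]
    -- φ part
    have hpwφ0 : ∀ u w : ℝ, pw φ (u, w) = pw φ (u, 0) := by
      intro u w
      exact is_const_of_deriv_eq_zero
        ((secW_contDiff (pw_contDiff hφ) u).differentiable (by simp))
        (fun s => C3 (u, s)) w 0
    have hpuφw : ∀ u w : ℝ, pu φ (u, w) = pu φ (u, 0) := by
      intro u w
      exact is_const_of_deriv_eq_zero
        ((secW_contDiff (pu_contDiff hφ) u).differentiable (by simp))
        (fun s => C2 (u, s)) w 0
    have hφdecomp : ∀ u w : ℝ, φ (u, w) = pw φ (u, 0) * w + φ (u, 0) := by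
      intro u w
      have key := integrate (f := fun s => φ (u, s))
        (g := fun s : ℝ => 0 * s ^ 2 + pw φ (u, 0) * s + 0)
        (g' := fun s : ℝ => 2 * 0 * s + pw φ (u, 0))
        ((secW_contDiff hφ u).differentiable (by simp))
        (fun x => hasDerivAt_poly2 0 (pw φ (u, 0)) 0 x)
        (fun x => by
          show pw φ (u, x) = 2 * 0 * x + pw φ (u, 0)
          rw [hpwφ0 u x]; ring) w
      rw [key]; ring
    -- derivative of u ↦ pw φ (u,0) vanishes
    have hpwφconst : ∀ u : ℝ, pw φ (u, 0) = pw φ (0, 0) := by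
      have hA3 : ∀ u : ℝ, pu (pw φ) (u, 0) = 0 := by
        intro u
        have d1 : HasDerivAt (fun s => pw φ (s, 0)) (pu (pw φ) (u, 0)) u :=
          (((secU_contDiff (pw_contDiff hφ) 0).differentiable (by simp)) u).hasDerivAt
        have d2 : HasDerivAt (fun s => φ (s, 0)) (pu φ (u, 0)) u :=
          (((secU_contDiff hφ 0).differentiable (by simp)) u).hasDerivAt
        have e : (fun s => φ (s, (1 : ℝ))) = fun s => pw φ (s, 0) * 1 + φ (s, 0) :=
          funext fun s => hφdecomp s 1
        have hsum : HasDerivAt (fun s => φ (s, (1 : ℝ)))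
            (pu (pw φ) (u, 0) * 1 + pu φ (u, 0)) u := by
          rw [e]; exact (d1.mul_const 1).add d2
        have h1 : pu φ (u, 1) = pu (pw φ) (u, 0) * 1 + pu φ (u, 0) := hsum.deriv
        have h2 : pu φ (u, 1) = pu φ (u, 0) := hpuφw u 1
        rw [h2] at h1; linarith
      intro u
      exact is_const_of_deriv_eq_zero
        ((secU_contDiff (pw_contDiff hφ) 0).differentiable (by simp))
        (fun s => hA3 s) u 0
    have hpwφ : ∀ p : ℝ × ℝ, pw φ p = pw φ (0, 0) := by
      rintro ⟨u, w⟩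
      show pw φ (u, w) = _
      rw [hpwφ0 u w, hpwφconst u]
    -- second derivative of φ in u
    have hpuu : ∀ u : ℝ, pu (pu φ) (u, 0) =
        -(pw φ (0, 0) * (pw φ (0, 0) + pu ψ (0, 0))) := by
      intro u
      have h := C1 (u, 0)
      rw [hpwφ (u, 0), hpuψ (u, 0), hpsw (u, 0)] at h
      rw [h]; ring
    have hpuφ0 : ∀ u : ℝ, pu φ (u, 0) =
        -(pw φ (0, 0) * (pw φ (0, 0) + pu ψ (0, 0))) * u + pu φ (0, 0) := by
      intro u
      have key := integrate (f := fun s => pu φ (s, 0))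
        (g := fun s : ℝ => 0 * s ^ 2 +
          (-(pw φ (0, 0) * (pw φ (0, 0) + pu ψ (0, 0)))) * s + 0)
        (g' := fun s : ℝ => 2 * 0 * s +
          (-(pw φ (0, 0) * (pw φ (0, 0) + pu ψ (0, 0)))))
        ((secU_contDiff (pu_contDiff hφ) 0).differentiable (by simp))
        (fun x => hasDerivAt_poly2 0 _ 0 x)
        (fun x => by
          show pu (pu φ) (x, 0) = _
          rw [hpuu x]; ring) u
      rw [key]; ring
    have hφ0 : ∀ u : ℝ, φ (u, 0) =
        -(1 / 2) * (pw φ (0, 0) * (pw φ (0, 0) + pu ψ (0, 0))) * u ^ 2 +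
          pu φ (0, 0) * u + φ (0, 0) := by
      intro u
      have key := integrate (f := fun s => φ (s, 0))
        (g := fun s : ℝ => (-(1 / 2) * (pw φ (0, 0) * (pw φ (0, 0) + pu ψ (0, 0)))) * s ^ 2 +
          pu φ (0, 0) * s + φ (0, 0))
        (g' := fun s : ℝ => 2 * (-(1 / 2) * (pw φ (0, 0) * (pw φ (0, 0) + pu ψ (0, 0)))) * s +
          pu φ (0, 0))
        ((secU_contDiff hφ 0).differentiable (by simp))
        (fun x => hasDerivAt_poly2 _ _ _ x)
        (fun x => by
          show pu φ (x, 0) = _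
          rw [hpuφ0 x]; ring) u
      rw [key]; ring
    refine ⟨pw φ (0, 0), pu ψ (0, 0), pu φ (0, 0), ψ (0, 0), φ (0, 0), ?_⟩
    rintro ⟨u, w⟩
    refine ⟨hψall (u, w), ?_⟩
    show φ (u, w) = _
    rw [hφdecomp u w, hpwφconst u, hφ0 u]
    ring
  · rintro ⟨β, γ, δ, c₁, c₂, h⟩
    have hψe : ψ = fun p : ℝ × ℝ => γ * p.1 + c₁ := funext fun p => (h p).1
    have hφe : φ = fun p : ℝ × ℝ =>
        β * p.2 - (1 / 2) * β * (β + γ) * p.1 ^ 2 + δ * p.1 + c₂ :=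
      funext fun p => (h p).2
    subst hψe hφe
    -- first derivatives
    have Hψu : ∀ p : ℝ × ℝ, pu (fun q : ℝ × ℝ => γ * q.1 + c₁) p = γ := by
      intro p
      show deriv (fun s : ℝ => γ * s + c₁) p.1 = γ
      have hd : HasDerivAt (fun s : ℝ => γ * s + c₁) (γ * 1) p.1 :=
        ((hasDerivAt_id p.1).const_mul γ).add_const c₁
      rw [hd.deriv, mul_one]
    have Hψw : ∀ p : ℝ × ℝ, pw (fun q : ℝ × ℝ => γ * q.1 + c₁) p = 0 := by
      intro p
      show deriv (fun _ : ℝ => γ * p.1 + c₁) p.2 = 0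
      simp
    have Hφu : ∀ p : ℝ × ℝ, pu (fun q : ℝ × ℝ =>
        β * q.2 - (1 / 2) * β * (β + γ) * q.1 ^ 2 + δ * q.1 + c₂) p =
        -(β * (β + γ)) * p.1 + δ := by
      intro p
      show deriv (fun s : ℝ =>
        β * p.2 - (1 / 2) * β * (β + γ) * s ^ 2 + δ * s + c₂) p.1 = _
      have hd : HasDerivAt (fun s : ℝ =>
          β * p.2 - (1 / 2) * β * (β + γ) * s ^ 2 + δ * s + c₂)
          (0 - (1 / 2) * β * (β + γ) * ((2 : ℕ) * p.1 ^ (2 - 1)) + δ * 1) p.1 := by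
        exact (((hasDerivAt_const p.1 (β * p.2)).sub
          ((hasDerivAt_pow 2 p.1).const_mul ((1 / 2) * β * (β + γ)))).add
          ((hasDerivAt_id p.1).const_mul δ)).add_const c₂
      rw [hd.deriv]; push_cast; ring
    have Hφw : ∀ p : ℝ × ℝ, pw (fun q : ℝ × ℝ =>
        β * q.2 - (1 / 2) * β * (β + γ) * q.1 ^ 2 + δ * q.1 + c₂) p = β := by
      intro p
      show deriv (fun s : ℝ =>
        β * s - (1 / 2) * β * (β + γ) * p.1 ^ 2 + δ * p.1 + c₂) p.2 = β
      have hd : HasDerivAt (fun s : ℝ =>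
          β * s - (1 / 2) * β * (β + γ) * p.1 ^ 2 + δ * p.1 + c₂) (β * 1) p.2 := by
        exact ((((hasDerivAt_id p.2).const_mul β).sub_const _).add_const _).add_const _
      rw [hd.deriv, mul_one]
    -- second derivatives
    have Hφuu : ∀ p : ℝ × ℝ, pu (pu (fun q : ℝ × ℝ =>
        β * q.2 - (1 / 2) * β * (β + γ) * q.1 ^ 2 + δ * q.1 + c₂)) p =
        -(β * (β + γ)) := by
      intro p
      have e : (fun s => pu (fun q : ℝ × ℝ =>
          β * q.2 - (1 / 2) * β * (β + γ) * q.1 ^ 2 + δ * q.1 + c₂) (s, p.2)) =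
          fun s : ℝ => -(β * (β + γ)) * s + δ := funext fun s => Hφu (s, p.2)
      show deriv _ p.1 = _
      rw [e]
      have hd : HasDerivAt (fun s : ℝ => -(β * (β + γ)) * s + δ)
          (-(β * (β + γ)) * 1) p.1 := ((hasDerivAt_id p.1).const_mul _).add_const δ
      rw [hd.deriv, mul_one]
    have Hφuw : ∀ p : ℝ × ℝ, pw (pu (fun q : ℝ × ℝ =>
        β * q.2 - (1 / 2) * β * (β + γ) * q.1 ^ 2 + δ * q.1 + c₂)) p = 0 := by
      intro p
      have e : (fun s => pu (fun q : ℝ × ℝ =>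
          β * q.2 - (1 / 2) * β * (β + γ) * q.1 ^ 2 + δ * q.1 + c₂) (p.1, s)) =
          fun _ : ℝ => -(β * (β + γ)) * p.1 + δ := funext fun s => Hφu (p.1, s)
      show deriv _ p.2 = 0
      rw [e]; simp
    have Hφww : ∀ p : ℝ × ℝ, pw (pw (fun q : ℝ × ℝ =>
        β * q.2 - (1 / 2) * β * (β + γ) * q.1 ^ 2 + δ * q.1 + c₂)) p = 0 := by
      intro p
      have e : (fun s => pw (fun q : ℝ × ℝ =>
          β * q.2 - (1 / 2) * β * (β + γ) * q.1 ^ 2 + δ * q.1 + c₂) (p.1, s)) =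
          fun _ : ℝ => β := funext fun s => Hφw (p.1, s)
      show deriv _ p.2 = 0
      rw [e]; simp
    have Hψuu : ∀ p : ℝ × ℝ, pu (pu (fun q : ℝ × ℝ => γ * q.1 + c₁)) p = 0 := by
      intro p
      have e : (fun s => pu (fun q : ℝ × ℝ => γ * q.1 + c₁) (s, p.2)) =
          fun _ : ℝ => γ := funext fun s => Hψu (s, p.2)
      show deriv _ p.1 = 0
      rw [e]; simp
    have Hψuw : ∀ p : ℝ × ℝ, pw (pu (fun q : ℝ × ℝ => γ * q.1 + c₁)) p = 0 := by
      intro p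
      have e : (fun s => pu (fun q : ℝ × ℝ => γ * q.1 + c₁) (p.1, s)) =
          fun _ : ℝ => γ := funext fun s => Hψu (p.1, s)
      show deriv _ p.2 = 0
      rw [e]; simp
    have Hψww : ∀ p : ℝ × ℝ, pw (pw (fun q : ℝ × ℝ => γ * q.1 + c₁)) p = 0 := by
      intro p
      have e : (fun s => pw (fun q : ℝ × ℝ => γ * q.1 + c₁) (p.1, s)) =
          fun _ : ℝ => 0 := funext fun s => Hψw (p.1, s)
      show deriv _ p.2 = 0
      rw [e]; simp
    have Hηuu : ∀ p : ℝ × ℝ, pu (pu (fun _ : ℝ × ℝ => (1 : ℝ))) p = 0 := by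
      intro p
      have e : (fun s => pu (fun _ : ℝ × ℝ => (1 : ℝ)) (s, p.2)) =
          fun _ : ℝ => 0 := funext fun s => hηu (s, p.2)
      show deriv _ p.1 = 0
      rw [e]; simp
    have Hηuw : ∀ p : ℝ × ℝ, pw (pu (fun _ : ℝ × ℝ => (1 : ℝ))) p = 0 := by
      intro p
      have e : (fun s => pu (fun _ : ℝ × ℝ => (1 : ℝ)) (p.1, s)) =
          fun _ : ℝ => 0 := funext fun s => hηu (p.1, s)
      show deriv _ p.2 = 0
      rw [e]; simp
    have Hηww : ∀ p : ℝ × ℝ, pw (pw (fun _ : ℝ × ℝ => (1 : ℝ))) p = 0 := by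
      intro p
      have e : (fun s => pw (fun _ : ℝ × ℝ => (1 : ℝ)) (p.1, s)) =
          fun _ : ℝ => 0 := funext fun s => hηw (p.1, s)
      show deriv _ p.2 = 0
      rw [e]; simp
    refine ⟨fun p _ => ?_, fun p => Hψw p⟩
    refine ⟨?_, ?_, ?_, ?_, ?_, ?_, ?_, ?_, ?_⟩ <;>
      simp only [Hφuu, Hφuw, Hφww, Hψuu, Hψuw, Hψww, Hηuu, Hηuw, Hηww,
        Hφu, Hφw, Hψu, Hψw, hηu, hηw] <;> ring
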